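/- arXiv:hep-th/0211225 — 2 statements merged into one kernel-verified Lean document; each statement's English description precedes it below -/
import Mathlib

section
/- Factorization equivalence (commutative case): Let B₁, B₂ be k×k complex matrices, I a k×N complex matrix, J an N×k complex matrix, and let Δ† (z₁,z₂) be the 2k×(N+2k) matrix with block rows (I, B₂+z₂, B₁+z₁) and (J†, −B₁†−z̄₁, B₂†+z̄₂) for complex scalars z₁, z₂. Then Δ†Δ is of the block form diag(f⁻¹, f⁻¹) for some k×k matrix f⁻¹ (i.e., the off-diagonal k×k blocks of Δ†Δ vanish and the two diagonal blocks are equal) for all z₁, z₂ ∈ ℂ, if and only if the ADHM equations hold: [B₁,B₁†] + [B₂,B₂†] + II† − J†J = 0 and [B₁,B₂] + IJ = 0. -/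
open Matrix

/-!
Write `X₁ = B₁ + z₁` and `X₂ = B₂ + z₂`. Then `Δ† = [[I, X₂, X₁], [J†, -X₁†, X₂†]]`, so the
upper-right block of `Δ†Δ` is `IJ + [X₁, X₂]` and the difference of its diagonal blocks is
`II† - J†J + [X₁, X₁†] + [X₂, X₂†]`. Scalar shifts do not change commutators, so these are the
ADHM moment maps, independently of `z₁, z₂`; the remaining block is the adjoint of the first.
-/

/-- The operator Δ†(z₁,z₂) of the commutative ADHM construction, with block rows
(I, B₂+z₂, B₁+z₁) and (J†, −B₁†−z̄₁, B₂†+z̄₂). -/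
noncomputable def Ddag (k N : ℕ) (B1 B2 : Matrix (Fin k) (Fin k) ℂ)
    (Imat : Matrix (Fin k) (Fin N) ℂ) (Jmat : Matrix (Fin N) (Fin k) ℂ)
    (z1 z2 : ℂ) : Matrix (Fin k ⊕ Fin k) (Fin N ⊕ (Fin k ⊕ Fin k)) ℂ :=
  Matrix.of fun i j =>
    match i, j with
    | Sum.inl i, Sum.inl j => Imat i j
    | Sum.inl i, Sum.inr (Sum.inl j) => (B2 + z2 • 1) i j
    | Sum.inl i, Sum.inr (Sum.inr j) => (B1 + z1 • 1) i j
    | Sum.inr i, Sum.inl j => Jmatᴴ i j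
    | Sum.inr i, Sum.inr (Sum.inl j) => (-B1ᴴ - (starRingEnd ℂ z1) • 1) i j
    | Sum.inr i, Sum.inr (Sum.inr j) => (B2ᴴ + (starRingEnd ℂ z2) • 1) i j

theorem add_smul_one_mul_add_smul_one_sub {R A : Type*} [CommSemiring R] [Ring A] [Algebra R A]
    (x y : A) (a b : R) :
    (x + a • 1) * (y + b • 1) - (y + b • 1) * (x + a • 1) = x * y - y * x := by
  simp only [add_mul, mul_add, smul_mul_assoc, mul_smul_comm, one_mul, mul_one,
    smul_add, smul_smul, mul_comm b a]
  abel

namespace Matrix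

theorem toBlocks₂₁_eq_conjTranspose_toBlocks₁₂ {α m n : Type*} [Star α]
    {M : Matrix (m ⊕ n) (m ⊕ n) α} (hM : M.IsHermitian) : M.toBlocks₂₁ = M.toBlocks₁₂ᴴ :=
  (congr_arg toBlocks₂₁ hM).symm

variable {R m n : Type*} [Ring R] [StarRing R] [Fintype m] [Fintype n]

theorem fromBlocks_fromCols_mul_conjTranspose {l : Type*} [Fintype l]
    (P Q : Matrix m l R) (X Y : Matrix m m R) :
    fromBlocks P (fromCols Y X) Q (fromCols (-Xᴴ) Yᴴ) *
        (fromBlocks P (fromCols Y X) Q (fromCols (-Xᴴ) Yᴴ))ᴴ =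
      fromBlocks (P * Pᴴ + (Y * Yᴴ + X * Xᴴ)) (P * Qᴴ + (X * Y - Y * X))
        (Q * Pᴴ + (Yᴴ * Xᴴ - Xᴴ * Yᴴ)) (Q * Qᴴ + (Xᴴ * X + Yᴴ * Y)) := by
  simp only [fromBlocks_conjTranspose, conjTranspose_fromCols_eq_fromRows_conjTranspose,
    fromBlocks_multiply, fromCols_mul_fromRows, conjTranspose_neg, conjTranspose_conjTranspose,
    mul_neg, neg_mul, neg_neg]
  congr 1 <;> abel

end Matrix

section Ddag

variable (k N : ℕ) (B1 B2 : Matrix (Fin k) (Fin k) ℂ)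
    (Imat : Matrix (Fin k) (Fin N) ℂ) (Jmat : Matrix (Fin N) (Fin k) ℂ) (z1 z2 : ℂ)

theorem Ddag_eq_fromBlocks : Ddag k N B1 B2 Imat Jmat z1 z2 =
    fromBlocks Imat (fromCols (B2 + z2 • 1) (B1 + z1 • 1)) Jmatᴴ
      (fromCols (-(B1 + z1 • 1)ᴴ) (B2 + z2 • 1)ᴴ) := by
  ext (i | i) (j | j | j) <;>
    simp [Ddag, conjTranspose_add, conjTranspose_smul, sub_eq_add_neg, add_comm]

theorem Ddag_mul_conjTranspose_toBlocks₁₂ :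
    (Ddag k N B1 B2 Imat Jmat z1 z2 * (Ddag k N B1 B2 Imat Jmat z1 z2)ᴴ).toBlocks₁₂ =
      (B1 * B2 - B2 * B1) + Imat * Jmat := by
  rw [Ddag_eq_fromBlocks, fromBlocks_fromCols_mul_conjTranspose, toBlocks_fromBlocks₁₂,
    conjTranspose_conjTranspose, add_smul_one_mul_add_smul_one_sub, add_comm]

theorem Ddag_mul_conjTranspose_toBlocks₁₁_sub_toBlocks₂₂ :
    (Ddag k N B1 B2 Imat Jmat z1 z2 * (Ddag k N B1 B2 Imat Jmat z1 z2)ᴴ).toBlocks₁₁ -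
        (Ddag k N B1 B2 Imat Jmat z1 z2 * (Ddag k N B1 B2 Imat Jmat z1 z2)ᴴ).toBlocks₂₂ =
      (B1 * B1ᴴ - B1ᴴ * B1) + (B2 * B2ᴴ - B2ᴴ * B2) + Imat * Imatᴴ - Jmatᴴ * Jmat := by
  have hshift (B : Matrix (Fin k) (Fin k) ℂ) (z : ℂ) :
      (B + z • 1) * (B + z • 1)ᴴ - (B + z • 1)ᴴ * (B + z • 1) = B * Bᴴ - Bᴴ * B := by
    rw [conjTranspose_add, conjTranspose_smul, conjTranspose_one,
      add_smul_one_mul_add_smul_one_sub]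
  rw [Ddag_eq_fromBlocks, fromBlocks_fromCols_mul_conjTranspose, toBlocks_fromBlocks₁₁,
    toBlocks_fromBlocks₂₂, conjTranspose_conjTranspose, ← hshift B1 z1, ← hshift B2 z2]
  abel

end Ddag

/-- Factorization equivalence (commutative case): Δ†Δ is of the form diag(f⁻¹,f⁻¹) for
all z₁,z₂ iff the ADHM equations μ_r = 0 and μ_c = 0 hold. -/
theorem stmt8 (k N : ℕ) (B1 B2 : Matrix (Fin k) (Fin k) ℂ)
    (Imat : Matrix (Fin k) (Fin N) ℂ) (Jmat : Matrix (Fin N) (Fin k) ℂ) :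
    (∀ z1 z2 : ℂ,
      (Ddag k N B1 B2 Imat Jmat z1 z2 * (Ddag k N B1 B2 Imat Jmat z1 z2)ᴴ).toBlocks₁₂ = 0 ∧
      (Ddag k N B1 B2 Imat Jmat z1 z2 * (Ddag k N B1 B2 Imat Jmat z1 z2)ᴴ).toBlocks₂₁ = 0 ∧
      (Ddag k N B1 B2 Imat Jmat z1 z2 * (Ddag k N B1 B2 Imat Jmat z1 z2)ᴴ).toBlocks₁₁ =
        (Ddag k N B1 B2 Imat Jmat z1 z2 * (Ddag k N B1 B2 Imat Jmat z1 z2)ᴴ).toBlocks₂₂)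
    ↔ ((B1 * B1ᴴ - B1ᴴ * B1) + (B2 * B2ᴴ - B2ᴴ * B2) + Imat * Imatᴴ - Jmatᴴ * Jmat = 0 ∧
       (B1 * B2 - B2 * B1) + Imat * Jmat = 0) := by
  constructor
  · intro h
    obtain ⟨h12, -, hdiag⟩ := h 0 0
    refine ⟨?_, Ddag_mul_conjTranspose_toBlocks₁₂ k N B1 B2 Imat Jmat 0 0 ▸ h12⟩
    rw [← Ddag_mul_conjTranspose_toBlocks₁₁_sub_toBlocks₂₂ k N B1 B2 Imat Jmat 0 0, hdiag,
      sub_self]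
  · rintro ⟨hr, hc⟩ z1 z2
    have h12 := (Ddag_mul_conjTranspose_toBlocks₁₂ k N B1 B2 Imat Jmat z1 z2).trans hc
    refine ⟨h12, ?_, ?_⟩
    · rw [toBlocks₂₁_eq_conjTranspose_toBlocks₁₂ (isHermitian_mul_conjTranspose_self _), h12,
        conjTranspose_zero]
    · rw [← sub_eq_zero, Ddag_mul_conjTranspose_toBlocks₁₁_sub_toBlocks₂₂, hr]
end

section
/- Courant–Fischer max-min: Let O be a self-adjoint operator on an n-dimensional complex inner product space with eigenvalues λ₀ ≤ λ₁ ≤ ⋯ ≤ λ_{n−1}. For vectors u₀,…,u_{m−1}, let d[u] = inf{⟨v, O v⟩ : ‖v‖ = 1, ⟨v, uᵢ⟩ = 0 for all i < m}. Then λ_m = max over all choices of u₀,…,u_{m−1} of d[u], and the maximum is attained when the uᵢ span the subspace spanned by eigenvectors for λ₀,…,λ_{m−1}. -/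
/-!
In an orthonormal eigenbasis `b`, `re ⟪w, O w⟫ = ∑ λᵢ ‖⟪bᵢ, w⟫‖²` and `∑ ‖⟪bᵢ, w⟫‖² = ‖w‖²`, so on
unit vectors the Rayleigh quotient is a convex combination of the eigenvalues, weighted by the
coefficients of `w`. The span of `b₀, …, b_m` has dimension `m + 1`, so it contains a unit vector
orthogonal to any `m` vectors `uᵢ`; its weights sit on `λ₀, …, λ_m`, hence `d[u] ≤ λ_m`. A unit
vector orthogonal to `b₀, …, b_{m-1}` has weights only on `λ_m, …, λ_{n-1}`, so for these
constraints `d ≥ λ_m`, with equality at `b_m`.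
-/

open Module

section

variable {𝕜 E : Type*} [RCLike 𝕜] [NormedAddCommGroup E] [InnerProductSpace 𝕜 E]

theorem Orthonormal.exists_orthonormalBasis_coe_eq {ι : Type*} [Fintype ι] [Nonempty ι]
    {v : ι → E} (hv : Orthonormal 𝕜 v) (hcard : Fintype.card ι = finrank 𝕜 E) :
    ∃ b : OrthonormalBasis ι 𝕜 E, ⇑b = v :=
  ⟨(basisOfOrthonormalOfCardEqFinrank hv hcard).toOrthonormalBasis (by simpa using hv),
    by simp⟩

theorem Orthonormal.inner_eq_zero_of_mem_span_range_comp {ι κ : Type*} {v : ι → E}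
    (hv : Orthonormal 𝕜 v) {f : κ → ι} {i : ι} (hi : i ∉ Set.range f) {w : E}
    (hw : w ∈ Submodule.span 𝕜 (Set.range (v ∘ f))) : inner 𝕜 (v i) w = 0 := by
  refine (Submodule.mem_orthogonal_singleton_iff_inner_right (𝕜 := 𝕜)).1
    (Submodule.span_le.2 ?_ hw)
  rintro _ ⟨j, rfl⟩
  exact (Submodule.mem_orthogonal_singleton_iff_inner_right (𝕜 := 𝕜)).2
    (hv.2 fun h => hi ⟨j, h.symm⟩)

theorem Submodule.exists_norm_eq_one_forall_inner_eq_zero {S : Submodule 𝕜 E} {κ : Type*}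
    [Fintype κ] (u : κ → E) (h : Fintype.card κ < finrank 𝕜 S) :
    ∃ w ∈ S, ‖w‖ = 1 ∧ ∀ i, inner 𝕜 (u i) w = 0 := by
  have : FiniteDimensional 𝕜 S := Module.finite_of_finrank_pos (by omega)
  let φ : S →ₗ[𝕜] (κ → 𝕜) := LinearMap.pi fun i => (innerₛₗ 𝕜 (u i)).comp S.subtype
  obtain ⟨x, hx, hx0⟩ := (Submodule.ne_bot_iff _).1 <|
    LinearMap.ker_ne_bot_of_finrank_lt (f := φ) (by simpa using h)
  have hx0' : (x : E) ≠ 0 := by simpa using hx0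
  refine ⟨(‖(x : E)‖⁻¹ : 𝕜) • (x : E), S.smul_mem _ x.2, norm_smul_inv_norm hx0', fun i => ?_⟩
  rw [inner_smul_right, show inner 𝕜 (u i) (x : E) = 0 from congrFun hx i, mul_zero]

/-- `sInf (rayleighValues O u)` is the paper's `d[u]`. -/
def rayleighValues {ι : Type*} (O : E →ₗ[𝕜] E) (u : ι → E) : Set ℝ :=
  {r | ∃ w : E, ‖w‖ = 1 ∧ (∀ i, inner 𝕜 (u i) w = 0) ∧ r = RCLike.re (inner 𝕜 w (O w))}

section EigenBasis

variable {ι : Type*} [Fintype ι] {b : OrthonormalBasis ι 𝕜 E} {O : E →ₗ[𝕜] E} {lam : ι → ℝ}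

theorem re_inner_map_self_eq_sum (hO : O.IsSymmetric) (heig : ∀ i, O (b i) = (lam i : 𝕜) • b i)
    (w : E) :
    RCLike.re (inner 𝕜 w (O w)) = ∑ i, lam i * ‖inner 𝕜 (b i) w‖ ^ 2 := by
  have hcoeff : ∀ i, inner 𝕜 (b i) (O w) = (lam i : 𝕜) * inner 𝕜 (b i) w := fun i => by
    rw [← hO, heig, inner_smul_left, RCLike.conj_ofReal]
  rw [← b.sum_inner_mul_inner, map_sum]
  refine Finset.sum_congr rfl fun i _ => ?_
  rw [hcoeff, ← inner_conj_symm w (b i), mul_left_comm, RCLike.conj_mul]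
  norm_cast

theorem re_inner_map_self_le (hO : O.IsSymmetric) (heig : ∀ i, O (b i) = (lam i : 𝕜) • b i)
    {w : E} {c : ℝ} (hc : ∀ i, inner 𝕜 (b i) w ≠ 0 → lam i ≤ c) :
    RCLike.re (inner 𝕜 w (O w)) ≤ c * ‖w‖ ^ 2 := by
  rw [re_inner_map_self_eq_sum hO heig, ← b.sum_sq_norm_inner_right, Finset.mul_sum]
  refine Finset.sum_le_sum fun i _ => ?_
  by_cases hi : inner 𝕜 (b i) w = 0
  · simp [hi]
  · exact mul_le_mul_of_nonneg_right (hc i hi) (by positivity)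

theorem le_re_inner_map_self (hO : O.IsSymmetric) (heig : ∀ i, O (b i) = (lam i : 𝕜) • b i)
    {w : E} {c : ℝ} (hc : ∀ i, inner 𝕜 (b i) w ≠ 0 → c ≤ lam i) :
    c * ‖w‖ ^ 2 ≤ RCLike.re (inner 𝕜 w (O w)) := by
  rw [re_inner_map_self_eq_sum hO heig, ← b.sum_sq_norm_inner_right, Finset.mul_sum]
  refine Finset.sum_le_sum fun i _ => ?_
  by_cases hi : inner 𝕜 (b i) w = 0
  · simp [hi]
  · exact mul_le_mul_of_nonneg_right (hc i hi) (by positivity)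

theorem bddBelow_rayleighValues (hO : O.IsSymmetric) (heig : ∀ i, O (b i) = (lam i : 𝕜) • b i)
    {κ : Type*} (u : κ → E) : BddBelow (rayleighValues O u) := by
  obtain ⟨c, hc⟩ := (Set.finite_range lam).bddBelow
  refine ⟨c, ?_⟩
  rintro _ ⟨w, hw, -, rfl⟩
  simpa [hw] using le_re_inner_map_self (w := w) hO heig fun i _ => hc ⟨i, rfl⟩

end EigenBasis

section FinEigenBasis

variable {n : ℕ} {b : OrthonormalBasis (Fin n) 𝕜 E} {O : E →ₗ[𝕜] E} {lam : Fin n → ℝ}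

theorem csInf_rayleighValues_le (hO : O.IsSymmetric)
    (heig : ∀ i, O (b i) = (lam i : 𝕜) • b i) (hmono : Monotone lam) {m : ℕ} (hm : m < n)
    (u : Fin m → E) : sInf (rayleighValues O u) ≤ lam ⟨m, hm⟩ := by
  let S := Submodule.span 𝕜 (Set.range (b ∘ Fin.castLE (show m + 1 ≤ n from hm)))
  have hS : finrank 𝕜 S = m + 1 := by
    rw [finrank_span_eq_card
      ((b.orthonormal.comp _ (Fin.castLE_injective _)).linearIndependent), Fintype.card_fin]
  obtain ⟨w, hwS, hw, hwu⟩ := S.exists_norm_eq_one_forall_inner_eq_zero u (by simp [hS])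
  refine (csInf_le (bddBelow_rayleighValues hO heig u) ⟨w, hw, hwu, rfl⟩).trans ?_
  simpa [hw] using re_inner_map_self_le (w := w) hO heig fun i hi => hmono <| by
    by_contra! hmi
    exact hi <| b.orthonormal.inner_eq_zero_of_mem_span_range_comp
      (by simpa [Fin.range_castLE]) hwS

theorem csInf_rayleighValues_castLE (hO : O.IsSymmetric)
    (heig : ∀ i, O (b i) = (lam i : 𝕜) • b i) (hmono : Monotone lam) {m : ℕ} (hm : m < n) :
    sInf (rayleighValues O (b ∘ Fin.castLE hm.le)) = lam ⟨m, hm⟩ := by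
  have heig_mem : lam ⟨m, hm⟩ ∈ rayleighValues O (b ∘ Fin.castLE hm.le) := by
    refine ⟨b ⟨m, hm⟩, b.orthonormal.1 _, fun i => b.orthonormal.2 ?_, ?_⟩
    · simpa [Fin.ext_iff] using i.isLt.ne
    · rw [heig, inner_smul_right, inner_self_eq_norm_sq_to_K, b.orthonormal.1]
      simp
  refine le_antisymm (csInf_le (bddBelow_rayleighValues hO heig _) heig_mem) ?_
  refine le_csInf ⟨_, heig_mem⟩ ?_
  rintro _ ⟨w, hw, hwb, rfl⟩
  simpa [hw] using le_re_inner_map_self (w := w) hO heig fun i hi => hmono <| by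
    by_contra! him
    exact hi (hwb ⟨i, him⟩)

end FinEigenBasis

end

/-- Courant–Fischer max-min: for a symmetric operator with orthonormal eigenbasis and
increasing eigenvalues λ₀ ≤ … ≤ λ_{n-1}, the constrained infimum d[u] of the Rayleigh
quotient is at most λ_m for every choice of m constraint vectors u, with equality when
the constraint vectors are the first m eigenvectors. -/
theorem stmt14 {E : Type*} [NormedAddCommGroup E] [InnerProductSpace ℂ E]
    {n : ℕ} (hdim : Module.finrank ℂ E = n)
    (O : E →ₗ[ℂ] E) (hO : O.IsSymmetric)
    (lam : Fin n → ℝ) (hmono : Monotone lam)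
    (v : Fin n → E) (hon : Orthonormal ℂ v)
    (heig : ∀ i, O (v i) = (lam i : ℂ) • v i)
    (m : ℕ) (hm : m < n) :
    (∀ u : Fin m → E,
      sInf {r : ℝ | ∃ w : E, ‖w‖ = 1 ∧ (∀ i, (inner ℂ (u i) w : ℂ) = 0) ∧
          r = (inner ℂ w (O w) : ℂ).re} ≤ lam ⟨m, hm⟩) ∧
    sInf {r : ℝ | ∃ w : E, ‖w‖ = 1 ∧
        (∀ i : Fin m, (inner ℂ (v (Fin.castLE hm.le i)) w : ℂ) = 0) ∧
        r = (inner ℂ w (O w) : ℂ).re} = lam ⟨m, hm⟩ := by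
  have : Nonempty (Fin n) := ⟨⟨m, hm⟩⟩
  obtain ⟨b, rfl⟩ := hon.exists_orthonormalBasis_coe_eq (by simp [hdim])
  exact ⟨csInf_rayleighValues_le hO heig hmono hm, csInf_rayleighValues_castLE hO heig hmono hm⟩
end
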